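/- If φ : B₀ → B is a non-expansive homomorphism of seminormed commutative rings whose image is dense in B (for the semimetric d(x,y) = |x − y|), then the Kähler seminorm on Ω_{B/B₀} is identically zero. -/

import Mathlib

open scoped NNReal TensorProduct

/-- A (nonarchimedean) seminorm on an additive group. -/
def IsGroupSeminorm {M : Type*} [AddCommGroup M] (f : M → ℝ≥0) : Prop :=
  f 0 = 0 ∧ ∀ x y : M, f (x - y) ≤ max (f x) (f y)

/-- A seminorm on a commutative ring. -/
def IsRingSeminorm {A : Type*} [CommRing A] (f : A → ℝ≥0) : Prop :=
  IsGroupSeminorm f ∧ f 1 = 1 ∧ ∀ x y : A, f (x * y) ≤ f x * f y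

/-- The Kähler seminorm on `Ω[B⁄A]` induced by a seminorm `vB` on `B`. -/
noncomputable def kahlerSeminorm (A B : Type*) [CommRing A] [CommRing B] [Algebra A B]
    (vB : B → ℝ≥0) (x : Ω[B⁄A]) : ℝ≥0 :=
  sInf { r | ∃ (n : ℕ) (c b : Fin n → B),
    x = ∑ i, c i • KaehlerDifferential.D A B (b i) ∧
    r = Finset.univ.sup fun i => vB (c i) * vB (b i) }

/-!
Every differential is a finite sum `∑ cᵢ • d bᵢ`. Since `d` kills the image of `B₀`, each `bᵢ` may
be replaced by `bᵢ - aᵢ` for any `aᵢ ∈ B₀` without changing the sum, and density lets us make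
every `|cᵢ| · |bᵢ - aᵢ|` as small as we like.
-/

theorem KaehlerDifferential.exists_eq_sum_smul_D (R S : Type*) [CommRing R] [CommRing S]
    [Algebra R S] (x : Ω[S⁄R]) :
    ∃ (n : ℕ) (c b : Fin n → S), x = ∑ i, c i • KaehlerDifferential.D R S (b i) := by
  have hx : x ∈ Submodule.span S (Set.range (KaehlerDifferential.D R S)) := by
    rw [KaehlerDifferential.span_range_derivation]; trivial
  obtain ⟨n, c, g, hg⟩ := Submodule.mem_span_set'.mp hx
  choose b hb using fun i => (g i).2
  exact ⟨n, c, b, by simp only [hb, hg]⟩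

section kahlerSeminorm

variable {A B : Type*} [CommRing A] [CommRing B] [Algebra A B] (vB : B → ℝ≥0)

theorem kahlerSeminorm_sum_smul_D_le {n : ℕ} (c b : Fin n → B) :
    kahlerSeminorm A B vB (∑ i, c i • KaehlerDifferential.D A B (b i)) ≤
      Finset.univ.sup fun i => vB (c i) * vB (b i) :=
  csInf_le (OrderBot.bddBelow _) ⟨n, c, b, rfl, rfl⟩

theorem kahlerSeminorm_sum_smul_D_le_sub_algebraMap {n : ℕ} (c b : Fin n → B) (a : Fin n → A) :
    kahlerSeminorm A B vB (∑ i, c i • KaehlerDifferential.D A B (b i)) ≤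
      Finset.univ.sup fun i => vB (c i) * vB (b i - algebraMap A B (a i)) := by
  have hD : ∀ i, KaehlerDifferential.D A B (b i - algebraMap A B (a i)) =
      KaehlerDifferential.D A B (b i) := fun i => by
    rw [map_sub, Derivation.map_algebraMap, sub_zero]
  calc kahlerSeminorm A B vB (∑ i, c i • KaehlerDifferential.D A B (b i))
      = kahlerSeminorm A B vB
          (∑ i, c i • KaehlerDifferential.D A B (b i - algebraMap A B (a i))) := by
        simp only [hD]
    _ ≤ _ := kahlerSeminorm_sum_smul_D_le vB c fun i => b i - algebraMap A B (a i)

end kahlerSeminorm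

theorem exists_mul_sub_algebraMap_lt {B₀ B : Type*} [CommRing B₀] [CommRing B] [Algebra B₀ B]
    {vB : B → ℝ≥0}
    (hdense : ∀ (b : B) (ε : ℝ≥0), 0 < ε → ∃ a : B₀, vB (b - algebraMap B₀ B a) < ε)
    (c b : B) {ε : ℝ≥0} (hε : 0 < ε) :
    ∃ a : B₀, vB c * vB (b - algebraMap B₀ B a) < ε := by
  obtain ⟨a, ha⟩ := hdense b (ε / (vB c + 1)) (by positivity)
  refine ⟨a, ?_⟩
  calc vB c * vB (b - algebraMap B₀ B a)
      ≤ vB c * (ε / (vB c + 1)) := by gcongr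
    _ < (vB c + 1) * (ε / (vB c + 1)) := by gcongr; exact lt_add_one _
    _ = ε := mul_div_cancel₀ _ (by positivity)

theorem kahlerSeminorm_eq_zero_of_denseRange_general
    {B₀ B : Type*} [CommRing B₀] [CommRing B] [Algebra B₀ B]
    (vB : B → ℝ≥0)
    (hdense : ∀ (b : B) (ε : ℝ≥0), 0 < ε → ∃ a : B₀, vB (b - algebraMap B₀ B a) < ε) :
    ∀ x : Ω[B⁄B₀], kahlerSeminorm B₀ B vB x = 0 := by
  intro x
  obtain ⟨n, c, b, rfl⟩ := KaehlerDifferential.exists_eq_sum_smul_D B₀ B x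
  refine le_antisymm (le_of_forall_gt_imp_ge_of_dense fun ε hε => ?_) zero_le
  choose a ha using fun i => exists_mul_sub_algebraMap_lt hdense (c i) (b i) hε
  exact (kahlerSeminorm_sum_smul_D_le_sub_algebraMap vB c b a).trans
    ((Finset.sup_lt_iff hε).mpr fun i _ => ha i).le

/-- If `φ : B₀ → B` is a non-expansive homomorphism of seminormed rings with dense image, then
the Kähler seminorm on `Ω_{B/B₀}` vanishes identically. -/
theorem kahlerSeminorm_eq_zero_of_denseRange
    {B₀ B : Type*} [CommRing B₀] [CommRing B] [Algebra B₀ B]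
    (vB₀ : B₀ → ℝ≥0) (vB : B → ℝ≥0)
    (hB₀ : IsRingSeminorm vB₀) (hB : IsRingSeminorm vB)
    (hnonexp : ∀ a : B₀, vB (algebraMap B₀ B a) ≤ vB₀ a)
    (hdense : ∀ (b : B) (ε : ℝ≥0), 0 < ε → ∃ a : B₀, vB (b - algebraMap B₀ B a) < ε) :
    ∀ x : Ω[B⁄B₀], kahlerSeminorm B₀ B vB x = 0 :=
  kahlerSeminorm_eq_zero_of_denseRange_general vB hdense
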